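/- Representation theorem for conceptual cumulative relations: a binary relation on 𝓛-formulas is a conceptual cumulative consequence relation if and only if it equals |~_𝓜 for some conceptual cumulative model 𝓜. -/
import Mathlib


namespace DR

/-- Formulas of the lattice-based language 𝓛: variables, ⊥, ⊤, ∧, ∨. -/
inductive Fm : Type where
  | var : ℕ → Fm
  | bot : Fm
  | top : Fm
  | and : Fm → Fm → Fm
  | or  : Fm → Fm → Fm

/-- A polarity (formal context) (A, X, I). -/
structure Polarity : Type 1 where
  Obj : Type
  Feat : Type
  I : Obj → Feat → Prop

namespace Polarity

variable (P : Polarity)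

def up (B : Set P.Obj) : Set P.Feat := {x | ∀ b ∈ B, P.I b x}
def dn (Y : Set P.Feat) : Set P.Obj := {a | ∀ y ∈ Y, P.I a y}

lemma subset_dn_up (B : Set P.Obj) : B ⊆ P.dn (P.up B) :=
  fun _ ha _ hx => hx _ ha

lemma subset_up_dn (Y : Set P.Feat) : Y ⊆ P.up (P.dn Y) :=
  fun _ hx _ ha => ha _ hx

lemma up_anti {B C : Set P.Obj} (h : B ⊆ C) : P.up C ⊆ P.up B :=
  fun _ hx b hb => hx b (h hb)

lemma dn_anti {Y Z : Set P.Feat} (h : Y ⊆ Z) : P.dn Z ⊆ P.dn Y :=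
  fun _ ha y hy => ha y (h hy)

end Polarity

/-- A formal concept of a polarity: a Galois-stable pair (extension, intension). -/
structure Concept (P : Polarity) : Type where
  ext : Set P.Obj
  int : Set P.Feat
  up_ext : P.up ext = int
  dn_int : P.dn int = ext

namespace Concept

variable {P : Polarity}

/-- Lattice meet of concepts: extensions intersect. -/
def meet (c d : Concept P) : Concept P where
  ext := c.ext ∩ d.ext
  int := P.up (c.ext ∩ d.ext)
  up_ext := rfl
  dn_int := by
    apply Set.Subset.antisymm
    · intro a ha
      constructor
      · rw [← c.dn_int]
        intro y hy
        apply ha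
        rw [← c.up_ext] at hy
        exact P.up_anti Set.inter_subset_left hy
      · rw [← d.dn_int]
        intro y hy
        apply ha
        rw [← d.up_ext] at hy
        exact P.up_anti Set.inter_subset_right hy
    · exact P.subset_dn_up _

/-- Lattice join of concepts: intensions intersect. -/
def join (c d : Concept P) : Concept P where
  ext := P.dn (c.int ∩ d.int)
  int := c.int ∩ d.int
  up_ext := by
    apply Set.Subset.antisymm
    · intro x hx
      constructor
      · rw [← c.up_ext]
        intro b hb
        apply hx
        rw [← c.dn_int] at hb
        exact P.dn_anti Set.inter_subset_left hb
      · rw [← d.up_ext]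
        intro b hb
        apply hx
        rw [← d.dn_int] at hb
        exact P.dn_anti Set.inter_subset_right hb
    · exact P.subset_up_dn _
  dn_int := rfl

/-- The greatest concept. -/
def top (P : Polarity) : Concept P where
  ext := Set.univ
  int := P.up Set.univ
  up_ext := rfl
  dn_int := Set.eq_univ_of_univ_subset (P.subset_dn_up _)

/-- The least concept. -/
def bot (P : Polarity) : Concept P where
  ext := P.dn Set.univ
  int := Set.univ
  up_ext := Set.eq_univ_of_univ_subset (P.subset_up_dn _)
  dn_int := rfl

end Concept

/-- A polarity-based model: a polarity with a valuation of variables into concepts. -/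
structure Model : Type 1 where
  P : Polarity
  V : ℕ → Concept P

namespace Model

/-- Homomorphic extension of the valuation to all formulas. -/
def interp (M : Model) : Fm → Concept M.P
  | .var n => M.V n
  | .bot => Concept.bot M.P
  | .top => Concept.top M.P
  | .and φ ψ => Concept.meet (M.interp φ) (M.interp ψ)
  | .or φ ψ => Concept.join (M.interp φ) (M.interp ψ)

/-- M, a ⊩ φ : the object a is in the extension of φ. -/
def objSat (M : Model) (a : M.P.Obj) (φ : Fm) : Prop := a ∈ (M.interp φ).ext

/-- M, x ≻ φ : the feature x is in the intension of φ. -/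
def featSat (M : Model) (x : M.P.Feat) (φ : Fm) : Prop := x ∈ (M.interp φ).int

end Model

/-- Validity of the sequent φ ⊢ ψ: in every polarity-based model the
extension of φ is contained in the extension of ψ. -/
def SeqValid (φ ψ : Fm) : Prop :=
  ∀ M : Model, (M.interp φ).ext ⊆ (M.interp ψ).ext

/-- A conceptual cumulative consequence relation: reflexive and closed
under (LLE), (RW), (CM) and (Cut). -/
structure IsCumulative (R : Fm → Fm → Prop) : Prop where
  refl : ∀ φ, R φ φ
  lle : ∀ φ ψ χ, SeqValid φ ψ → SeqValid ψ φ → R φ χ → R ψ χ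
  rw : ∀ φ ψ χ, SeqValid φ ψ → R χ φ → R χ ψ
  cm : ∀ φ ψ χ, R φ ψ → R φ χ → R (Fm.and φ ψ) χ
  cut : ∀ φ ψ χ, R (Fm.and φ ψ) χ → R φ ψ → R φ χ

/-- Closure under the rule (Loop). -/
def LoopClosed (R : Fm → Fm → Prop) : Prop :=
  ∀ (n : ℕ) (φ : ℕ → Fm),
    (∀ i < n, R (φ i) (φ (i + 1))) → R (φ n) (φ 0) → R (φ 0) (φ n)

/-- A pointed polarity-based model. -/
structure PointedModel : Type 1 where
  M : Model
  pt : M.P.Obj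

/-- Satisfaction at a pointed model. -/
def PointedModel.sat (Ma : PointedModel) (φ : Fm) : Prop := Ma.M.objSat Ma.pt φ

/-- A pointed model is normal for φ iff it satisfies every plausible consequence of φ. -/
def NormalFor (R : Fm → Fm → Prop) (Ma : PointedModel) (φ : Fm) : Prop :=
  ∀ ψ, R φ ψ → Ma.sat ψ

/-- A pointed model is supernormal for φ. -/
def SupernormalFor (R : Fm → Fm → Prop) (Ma : PointedModel) (φ : Fm) : Prop :=
  ∀ ψ, R φ ψ ↔ Ma.sat ψ

/-- A frame (S, l, ≺): states labelled by sets of pointed polarity-based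
models with a preference relation. -/
structure Frame : Type 2 where
  S : Type
  l : S → Set PointedModel
  prec : S → S → Prop

/-- t is minimal in P (w.r.t. prec). -/
def MinimalIn {α : Type _} (prec : α → α → Prop) (P : Set α) (t : α) : Prop :=
  t ∈ P ∧ ∀ s ∈ P, ¬ prec s t

/-- t is a minimum of P (w.r.t. prec). -/
def IsMinimum {α : Type _} (prec : α → α → Prop) (P : Set α) (t : α) : Prop :=
  t ∈ P ∧ ∀ s ∈ P, s ≠ t → prec t s

/-- P is smooth (w.r.t. prec). -/
def Smooth {α : Type _} (prec : α → α → Prop) (P : Set α) : Prop :=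
  ∀ t ∈ P, MinimalIn prec P t ∨ ∃ s, MinimalIn prec P s ∧ prec s t

namespace Frame

/-- s ⊨ φ : every pointed model in l(s) satisfies φ. -/
def stateSat (F : Frame) (s : F.S) (φ : Fm) : Prop :=
  ∀ Ma ∈ F.l s, Ma.sat φ

/-- φ̂ : the set of states satisfying φ. -/
def hat (F : Frame) (φ : Fm) : Set F.S := {s | F.stateSat s φ}

/-- A conceptual cumulative model: φ̂ is smooth for every φ. -/
def IsCumulativeModel (F : Frame) : Prop :=
  ∀ φ : Fm, Smooth F.prec (F.hat φ)

/-- The consequence relation |~_𝓜 defined by a frame: every state minimal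
in φ̂ belongs to ψ̂. -/
def conseq (F : Frame) (φ ψ : Fm) : Prop :=
  ∀ s, MinimalIn F.prec (F.hat φ) s → s ∈ F.hat ψ

/-- Replace the preference relation of a frame. -/
def withPrec (F : Frame) (p : F.S → F.S → Prop) : Frame := ⟨F.S, F.l, p⟩

end Frame

/-- The equivalence class φ/∼ of φ under ∼ (φ ∼ ψ iff φ |~ ψ and ψ |~ φ). -/
def cls (R : Fm → Fm → Prop) (φ : Fm) : Set Fm := {ψ | R φ ψ ∧ R ψ φ}

/-- φ/∼ ≤ ψ/∼ : there is χ ∈ φ/∼ with ψ |~ χ (ψ any representative of ψ/∼). -/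
def clsLE (R : Fm → Fm → Prop) (C D : Set Fm) : Prop :=
  ∃ χ ∈ C, ∃ ψ ∈ D, R ψ χ

/-- The canonical model of a consequence relation: states are the
equivalence classes φ/∼, labelled by the normal pointed models for φ,
with φ/∼ ≺ ψ/∼ iff φ/∼ ≤ ψ/∼ and φ/∼ ≠ ψ/∼. -/
def canonicalFrame (R : Fm → Fm → Prop) : Frame where
  S := {C : Set Fm // ∃ φ, C = cls R φ}
  l := fun s => {Ma | ∃ φ, s.val = cls R φ ∧ NormalFor R Ma φ}
  prec := fun s t => clsLE R s.val t.val ∧ s ≠ t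

/-- The state φ/∼ of the canonical model. -/
def canonicalState (R : Fm → Fm → Prop) (φ : Fm) : (canonicalFrame R).S :=
  ⟨cls R φ, φ, rfl⟩


/-! ### Auxiliary lemmas for the representation theorem -/

section SeqValidLemmas

lemma seqValid_refl (φ : Fm) : SeqValid φ φ := fun _ _ h => h

lemma seqValid_trans {φ ψ χ : Fm} (h1 : SeqValid φ ψ) (h2 : SeqValid ψ χ) :
    SeqValid φ χ := fun M => (h1 M).trans (h2 M)

lemma seq_and_left (φ ψ : Fm) : SeqValid (φ.and ψ) φ := fun _ _ h => h.1

lemma seq_and_right (φ ψ : Fm) : SeqValid (φ.and ψ) ψ := fun _ _ h => h.2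

lemma seq_and_intro {χ φ ψ : Fm} (h1 : SeqValid χ φ) (h2 : SeqValid χ ψ) :
    SeqValid χ (φ.and ψ) := fun M _ h => ⟨h1 M h, h2 M h⟩

lemma seq_and_comm (φ ψ : Fm) : SeqValid (φ.and ψ) (ψ.and φ) :=
  seq_and_intro (seq_and_right φ ψ) (seq_and_left φ ψ)

lemma seq_le_top (φ : Fm) : SeqValid φ .top := fun _ _ _ => trivial

lemma seq_bot_le (φ : Fm) : SeqValid .bot φ := by
  intro M a ha
  have h := (M.interp φ).dn_int
  rw [← h]
  intro y _
  exact ha y trivial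

lemma seq_or_inl (φ ψ : Fm) : SeqValid φ (φ.or ψ) := by
  intro M a ha
  rw [← (M.interp φ).dn_int] at ha
  intro y hy
  exact ha y hy.1

lemma seq_or_inr (φ ψ : Fm) : SeqValid ψ (φ.or ψ) := by
  intro M a ha
  rw [← (M.interp ψ).dn_int] at ha
  intro y hy
  exact ha y hy.2

lemma seq_or_elim {φ ψ χ : Fm} (h1 : SeqValid φ χ) (h2 : SeqValid ψ χ) :
    SeqValid (φ.or ψ) χ := by
  intro M a ha
  rw [← (M.interp χ).dn_int]
  intro y hy
  refine ha y ⟨?_, ?_⟩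
  · rw [← (M.interp φ).up_ext]
    intro b hb
    have hb' := h1 M hb
    rw [← (M.interp χ).dn_int] at hb'
    exact hb' y hy
  · rw [← (M.interp ψ).up_ext]
    intro b hb
    have hb' := h2 M hb
    rw [← (M.interp χ).dn_int] at hb'
    exact hb' y hy

end SeqValidLemmas

section CumulativeLemmas

variable {R : Fm → Fm → Prop}

/-- Equivalent premises have the same plausible consequences. -/
lemma cum_eqThy (hc : IsCumulative R) {α β χ : Fm}
    (hab : R α β) (hba : R β α) (h : R α χ) : R β χ := by
  have h1 := hc.cm α β χ hab h
  have h2 := hc.lle (α.and β) (β.and α) χ (seq_and_comm α β) (seq_and_comm β α) h1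
  exact hc.cut β α χ h2 hba

/-- The rule (AND) is derivable. -/
lemma cum_and (hc : IsCumulative R) {φ ψ χ : Fm}
    (hψ : R φ ψ) (hχ : R φ χ) : R φ (ψ.and χ) := by
  have h1 := hc.cm φ ψ χ hψ hχ
  have v : SeqValid ((φ.and ψ).and χ) (ψ.and χ) :=
    seq_and_intro (seqValid_trans (seq_and_left _ _) (seq_and_right _ _))
      (seq_and_right _ _)
  have h2 : R ((φ.and ψ).and χ) (ψ.and χ) := hc.rw _ _ _ v (hc.refl _)
  have h3 : R (φ.and ψ) (ψ.and χ) := hc.cut (φ.and ψ) χ (ψ.and χ) h2 h1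
  exact hc.cut φ ψ (ψ.and χ) h3 hψ

end CumulativeLemmas

section Canonical

/-- Satisfaction at an object of the canonical polarity: `some α` behaves like
the formula α, `none` behaves like the theory T. -/
def sat0 (T : Set Fm) (a : Option Fm) (ψ : Fm) : Prop :=
  match a with
  | some α => SeqValid α ψ
  | none => ψ ∈ T

/-- The canonical polarity for a theory T. -/
def canonP (T : Set Fm) : Polarity := ⟨Option Fm, Fm, sat0 T⟩

variable {T : Set Fm}

lemma sat0_mono (hmono : ∀ ψ χ, ψ ∈ T → SeqValid ψ χ → χ ∈ T)
    {a : Option Fm} {ψ χ : Fm} (h : sat0 T a ψ) (v : SeqValid ψ χ) :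
    sat0 T a χ := by
  cases a with
  | some α => exact seqValid_trans h v
  | none => exact hmono ψ χ h v

lemma canon_up (hmono : ∀ ψ χ, ψ ∈ T → SeqValid ψ χ → χ ∈ T) (ψ : Fm) :
    (canonP T).up {a | sat0 T a ψ} = {x | SeqValid ψ x} := by
  ext x
  constructor
  · intro h
    exact h (some ψ) (seqValid_refl ψ)
  · intro hx b hb
    exact sat0_mono hmono hb hx

lemma canon_dn (hmono : ∀ ψ χ, ψ ∈ T → SeqValid ψ χ → χ ∈ T) (ψ : Fm) :
    (canonP T).dn {x | SeqValid ψ x} = {a | sat0 T a ψ} := by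
  ext a
  constructor
  · intro h
    exact h ψ (seqValid_refl ψ)
  · intro ha y hy
    exact sat0_mono hmono ha hy

/-- The canonical concept of a formula. -/
def canonC (hmono : ∀ ψ χ, ψ ∈ T → SeqValid ψ χ → χ ∈ T) (ψ : Fm) :
    Concept (canonP T) where
  ext := {a | sat0 T a ψ}
  int := {x | SeqValid ψ x}
  up_ext := canon_up hmono ψ
  dn_int := canon_dn hmono ψ

/-- The canonical polarity-based model of a theory T. -/
def canonM (hmono : ∀ ψ χ, ψ ∈ T → SeqValid ψ χ → χ ∈ T) : Model :=
  ⟨canonP T, fun n => canonC hmono (.var n)⟩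

lemma canon_interp (hmono : ∀ ψ χ, ψ ∈ T → SeqValid ψ χ → χ ∈ T)
    (hand : ∀ ψ χ, ψ ∈ T → χ ∈ T → ψ.and χ ∈ T) (htop : Fm.top ∈ T) :
    ∀ ψ : Fm, ((canonM hmono).interp ψ).ext = {a | sat0 T a ψ} := by
  intro ψ
  induction ψ with
  | var n => rfl
  | bot =>
      show (canonP T).dn Set.univ = _
      ext a
      constructor
      · intro h
        exact h Fm.bot trivial
      · intro ha y _
        exact sat0_mono hmono ha (seq_bot_le y)
  | top =>
      show (Set.univ : Set (Option Fm)) = _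
      ext a
      constructor
      · intro _
        cases a with
        | some α => exact seq_le_top α
        | none => exact htop
      · intro _
        trivial
  | and φ ψ ihφ ihψ =>
      show ((canonM hmono).interp φ).ext ∩ ((canonM hmono).interp ψ).ext = _
      rw [ihφ, ihψ]
      ext a
      constructor
      · rintro ⟨h1, h2⟩
        cases a with
        | some α => exact seq_and_intro h1 h2
        | none => exact hand φ ψ h1 h2
      · intro h
        exact ⟨sat0_mono hmono h (seq_and_left φ ψ),
          sat0_mono hmono h (seq_and_right φ ψ)⟩
  | or φ ψ ihφ ihψ =>
      have hφ : ((canonM hmono).interp φ).int = {x | SeqValid φ x} := by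
        rw [← ((canonM hmono).interp φ).up_ext, ihφ]
        exact canon_up hmono φ
      have hψ : ((canonM hmono).interp ψ).int = {x | SeqValid ψ x} := by
        rw [← ((canonM hmono).interp ψ).up_ext, ihψ]
        exact canon_up hmono ψ
      show (canonP T).dn (((canonM hmono).interp φ).int ∩ ((canonM hmono).interp ψ).int) = _
      rw [hφ, hψ]
      ext a
      constructor
      · intro h
        exact h (φ.or ψ) ⟨seq_or_inl φ ψ, seq_or_inr φ ψ⟩
      · intro ha y hy
        exact sat0_mono hmono ha (seq_or_elim hy.1 hy.2)

/-- The supernormal pointed model of a theory T. -/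
def canonPt (hmono : ∀ ψ χ, ψ ∈ T → SeqValid ψ χ → χ ∈ T) : PointedModel :=
  ⟨canonM hmono, (none : Option Fm)⟩

lemma canonPt_sat (hmono : ∀ ψ χ, ψ ∈ T → SeqValid ψ χ → χ ∈ T)
    (hand : ∀ ψ χ, ψ ∈ T → χ ∈ T → ψ.and χ ∈ T) (htop : Fm.top ∈ T)
    (ψ : Fm) : (canonPt hmono).sat ψ ↔ ψ ∈ T := by
  show (none : Option Fm) ∈ ((canonM hmono).interp ψ).ext ↔ _
  rw [canon_interp hmono hand htop ψ]
  exact Iff.rfl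

end Canonical

section RepFrame

variable {R : Fm → Fm → Prop}

/-- Mutual plausible consequence. -/
def Sim (R : Fm → Fm → Prop) (α β : Fm) : Prop := R α β ∧ R β α

lemma thy_mono (hc : IsCumulative R) (s : Fm) :
    ∀ ψ χ, ψ ∈ {ψ | R s ψ} → SeqValid ψ χ → χ ∈ {ψ | R s ψ} :=
  fun ψ χ h v => hc.rw ψ χ s v h

/-- The representing frame of a cumulative relation: states are formulas,
each labelled by its supernormal pointed model. -/
def repFrame (R : Fm → Fm → Prop) (hc : IsCumulative R) : Frame where
  S := Fm
  l := fun s => {canonPt (thy_mono hc s)}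
  prec := fun s t => R t s ∧ ¬ Sim R s t

lemma repFrame_sat (hc : IsCumulative R) (s ψ : Fm) :
    (repFrame R hc).stateSat s ψ ↔ R s ψ := by
  have key := canonPt_sat (thy_mono hc s)
    (fun φ χ hφ hχ => cum_and hc hφ hχ)
    (hc.rw s Fm.top s (seq_le_top s) (hc.refl s)) ψ
  constructor
  · intro h
    exact key.1 (h _ rfl)
  · intro h Ma hMa
    rw [show Ma = canonPt (thy_mono hc s) from hMa]
    exact key.2 h

lemma repFrame_hat (hc : IsCumulative R) (φ : Fm) :
    (repFrame R hc).hat φ = {s | R s φ} := by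
  ext s
  exact repFrame_sat hc s φ

lemma repFrame_min (hc : IsCumulative R) (φ s : Fm) :
    MinimalIn (repFrame R hc).prec ((repFrame R hc).hat φ) s ↔ Sim R s φ := by
  rw [repFrame_hat hc φ]
  constructor
  · rintro ⟨hs, hmin⟩
    have hφ : φ ∈ {s | R s φ} := hc.refl φ
    have h := hmin φ hφ
    by_contra hns
    exact h ⟨hs, fun h' => hns ⟨h'.2, h'.1⟩⟩
  · rintro ⟨h1, h2⟩
    refine ⟨h1, ?_⟩
    rintro u hu ⟨hsu, hnsim⟩
    apply hnsim
    have hφu : R φ u := cum_eqThy hc h1 h2 hsu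
    have hus : R u s := cum_eqThy hc hφu hu h2
    exact ⟨hus, hsu⟩

lemma repFrame_conseq (hc : IsCumulative R) :
    R = (repFrame R hc).conseq := by
  funext φ ψ
  apply propext
  constructor
  · intro h s hmin
    have hsim := (repFrame_min hc φ s).1 hmin
    rw [repFrame_hat hc ψ]
    exact cum_eqThy hc hsim.2 hsim.1 h
  · intro h
    have hmin : MinimalIn (repFrame R hc).prec ((repFrame R hc).hat φ) φ :=
      (repFrame_min hc φ φ).2 ⟨hc.refl φ, hc.refl φ⟩
    have := h φ hmin
    rw [repFrame_hat hc ψ] at this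
    exact this

lemma repFrame_smooth (hc : IsCumulative R) :
    (repFrame R hc).IsCumulativeModel := by
  intro φ t ht
  have htφ : R t φ := by rwa [repFrame_hat hc φ] at ht
  by_cases h : Sim R t φ
  · left
    exact (repFrame_min hc φ t).2 h
  · right
    refine ⟨φ, (repFrame_min hc φ φ).2 ⟨hc.refl φ, hc.refl φ⟩, htφ, ?_⟩
    intro hsim
    exact h ⟨hsim.2, hsim.1⟩

end RepFrame

section Soundness

variable {F : Frame}

lemma stateSat_mono {φ ψ : Fm} (v : SeqValid φ ψ) {s : F.S}
    (h : F.stateSat s φ) : F.stateSat s ψ :=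
  fun Ma hMa => v Ma.M (h Ma hMa)

lemma hat_and (F : Frame) (φ ψ : Fm) :
    F.hat (φ.and ψ) = F.hat φ ∩ F.hat ψ := by
  ext s
  constructor
  · intro h
    exact ⟨fun Ma hMa => (h Ma hMa).1, fun Ma hMa => (h Ma hMa).2⟩
  · rintro ⟨h1, h2⟩ Ma hMa
    exact ⟨h1 Ma hMa, h2 Ma hMa⟩

lemma conseq_cumulative (hsm : F.IsCumulativeModel) :
    IsCumulative F.conseq := by
  constructor
  · intro φ s hmin
    exact hmin.1
  · intro φ ψ χ v1 v2 h s hmin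
    have hatEq : F.hat φ = F.hat ψ := by
      ext u
      exact ⟨stateSat_mono v1, stateSat_mono v2⟩
    exact h s (by rwa [← hatEq] at hmin)
  · intro φ ψ χ v h s hmin
    exact stateSat_mono v (h s hmin)
  · intro φ ψ χ hψ hχ s hmin
    rw [hat_and] at hmin
    have hsφ : s ∈ F.hat φ := hmin.1.1
    rcases hsm φ s hsφ with hm | ⟨m, hmmin, hms⟩
    · exact hχ s hm
    · exfalso
      have hmψ : m ∈ F.hat ψ := hψ m hmmin
      exact hmin.2 m ⟨hmmin.1, hmψ⟩ hms
  · intro φ ψ χ h hψ s hmin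
    have hsψ : s ∈ F.hat ψ := hψ s hmin
    refine h s ?_
    rw [hat_and]
    refine ⟨⟨hmin.1, hsψ⟩, ?_⟩
    intro u hu hprec
    exact hmin.2 u hu.1 hprec

end Soundness

/-- representation theorem for conceptual cumulative relations. -/
theorem representation_cumulative (R : Fm → Fm → Prop) :
    IsCumulative R ↔
    ∃ F : Frame, F.IsCumulativeModel ∧ R = F.conseq := by
  constructor
  · intro hc
    exact ⟨repFrame R hc, repFrame_smooth hc, repFrame_conseq hc⟩
  · rintro ⟨F, hsm, rfl⟩
    exact conseq_cumulative hsm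

end DR
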